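/- arXiv:1311.7250 — 7 statements merged into one kernel-verified Lean document; each statement's English description precedes it below -/
import Mathlib

section
/- Let K1 and K2 be n×n (-1,1)-matrices of skew type which are Hadamard equivalent, i.e., there exist monomial matrices P, Q with entries in {-1,0,1} with P·K1·Q^T = K2. Then det(K1 - I) = det(K2 - I). -/
open Matrix

/-- A `{-1,0,1}`-monomial matrix: the product of a `±1` diagonal matrix
and a permutation matrix. -/
def IsMonomial {n : ℕ} (Q : Matrix (Fin n) (Fin n) ℝ) : Prop :=
  ∃ (d : Fin n → ℝ) (σ : Equiv.Perm (Fin n)),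
    (∀ i, d i = 1 ∨ d i = -1) ∧ Q = Matrix.diagonal d * σ.permMatrix ℝ

/-- A `(-1,1)`-matrix of skew type: entries `±1` and `K + Kᵀ = 2I`. -/
def IsSkewType {n : ℕ} (K : Matrix (Fin n) (Fin n) ℝ) : Prop :=
  (∀ i j, K i j = 1 ∨ K i j = -1) ∧
  K + Kᵀ = (2 : ℝ) • (1 : Matrix (Fin n) (Fin n) ℝ)

/-- A monomial matrix times its transpose is the identity. -/
lemma IsMonomial.mul_transpose {n : ℕ} {Q : Matrix (Fin n) (Fin n) ℝ}
    (h : IsMonomial Q) : Q * Qᵀ = 1 := by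
  obtain ⟨d, σ, hd, rfl⟩ := h
  have hperm : (σ.permMatrix ℝ) * (σ.permMatrix ℝ)ᵀ = 1 := by
    rw [Equiv.Perm.permMatrix, ← PEquiv.toMatrix_symm, ← PEquiv.toMatrix_trans,
      ← Equiv.toPEquiv_symm, ← Equiv.toPEquiv_trans]
    simp
  have hdiag : (Matrix.diagonal d) * (Matrix.diagonal d) = 1 := by
    rw [Matrix.diagonal_mul_diagonal]
    have hdd : (fun i => d i * d i) = fun _ : Fin n => (1:ℝ) := by
      funext i; rcases hd i with h | h <;> rw [h] <;> norm_num
    rw [hdd]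
    exact Matrix.diagonal_one
  calc Matrix.diagonal d * σ.permMatrix ℝ * (Matrix.diagonal d * σ.permMatrix ℝ)ᵀ
      = Matrix.diagonal d * ((σ.permMatrix ℝ) * (σ.permMatrix ℝ)ᵀ) * (Matrix.diagonal d)ᵀ := by
        rw [Matrix.transpose_mul]; simp only [Matrix.mul_assoc]
    _ = 1 := by rw [hperm, Matrix.mul_one, Matrix.diagonal_transpose, hdiag]

lemma IsMonomial.transpose_mul {n : ℕ} {Q : Matrix (Fin n) (Fin n) ℝ}
    (h : IsMonomial Q) : Qᵀ * Q = 1 :=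
  mul_eq_one_comm.mp h.mul_transpose

/-- The determinant of a real skew-symmetric matrix is nonnegative. -/
lemma det_nonneg_of_skew {n : ℕ} (S : Matrix (Fin n) (Fin n) ℝ)
    (hS : Sᵀ = -S) : 0 ≤ S.det := by
  set f : ℝ → ℝ := fun x => (x • (1 : Matrix (Fin n) (Fin n) ℝ) + S).det with hf
  have hfcont : Continuous f := by
    apply Continuous.matrix_det
    exact (continuous_id.smul continuous_const).add continuous_const
  have hfne : ∀ x : ℝ, x ≠ 0 → f x ≠ 0 := by
    intro x hx h0
    obtain ⟨v, hv, hmv⟩ := (Matrix.exists_mulVec_eq_zero_iff).mpr h0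
    have hq : v ⬝ᵥ (x • (1 : Matrix (Fin n) (Fin n) ℝ) + S).mulVec v = 0 := by
      rw [hmv, dotProduct_zero]
    rw [Matrix.add_mulVec, Matrix.smul_mulVec, Matrix.one_mulVec,
      dotProduct_add, dotProduct_smul] at hq
    have hskew : v ⬝ᵥ S.mulVec v = 0 := by
      have e : v ᵥ* S = -(S *ᵥ v) := by
        have h3 := Matrix.vecMul_transpose (A := Sᵀ) (x := v)
        rw [Matrix.transpose_transpose, hS, Matrix.neg_mulVec] at h3
        exact h3
      have h4 : v ⬝ᵥ S.mulVec v = -(v ⬝ᵥ S.mulVec v) := by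
        conv_lhs => rw [Matrix.dotProduct_mulVec, e, neg_dotProduct,
          dotProduct_comm]
      linarith
    rw [hskew, add_zero] at hq
    have hvv : (0 : ℝ) < v ⬝ᵥ v := by
      have hnn : 0 ≤ v ⬝ᵥ v := by
        rw [dotProduct]
        exact Finset.sum_nonneg fun i _ => mul_self_nonneg _
      rcases lt_or_eq_of_le hnn with h | h
      · exact h
      · exact absurd ((dotProduct_self_eq_zero).mp h.symm) hv
    have hne : x * (v ⬝ᵥ v) ≠ 0 := mul_ne_zero hx (ne_of_gt hvv)
    simp only [smul_eq_mul] at hq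
    exact hne hq
  -- find a positive point where f is positive
  have hg : Continuous fun t : ℝ => ((1 : Matrix (Fin n) (Fin n) ℝ) + t • S).det := by
    apply Continuous.matrix_det
    exact continuous_const.add (continuous_id.smul continuous_const)
  have hg0 : ((1 : Matrix (Fin n) (Fin n) ℝ) + (0:ℝ) • S).det = 1 := by simp
  obtain ⟨t₀, ht₀pos, hgt₀⟩ :
      ∃ t₀ : ℝ, 0 < t₀ ∧ 0 < ((1 : Matrix (Fin n) (Fin n) ℝ) + t₀ • S).det := by
    have hev : ∀ᶠ t in nhds (0:ℝ), 0 < ((1 : Matrix (Fin n) (Fin n) ℝ) + t • S).det := by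
      have hlt : (0:ℝ) < ((1 : Matrix (Fin n) (Fin n) ℝ) + (0:ℝ) • S).det := by
        rw [hg0]; norm_num
      exact continuousAt_const.eventually_lt (hg.continuousAt (x := (0:ℝ))) hlt
    have h2 : ∀ᶠ t in nhdsWithin (0:ℝ) (Set.Ioi 0),
        0 < ((1 : Matrix (Fin n) (Fin n) ℝ) + t • S).det ∧ t ∈ Set.Ioi (0:ℝ) :=
      (eventually_nhdsWithin_of_eventually_nhds hev).and eventually_mem_nhdsWithin
    obtain ⟨t₀, hpos, ht₀⟩ := h2.exists
    exact ⟨t₀, ht₀, hpos⟩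
  have hfx₀ : 0 < f t₀⁻¹ := by
    have hinv : (0:ℝ) < t₀⁻¹ := inv_pos.mpr ht₀pos
    have key : t₀⁻¹ • ((1 : Matrix (Fin n) (Fin n) ℝ) + t₀ • S)
        = t₀⁻¹ • (1 : Matrix (Fin n) (Fin n) ℝ) + S := by
      rw [smul_add, smul_smul, inv_mul_cancel₀ (ne_of_gt ht₀pos), one_smul]
    have hval : f t₀⁻¹ = t₀⁻¹ ^ n * ((1 : Matrix (Fin n) (Fin n) ℝ) + t₀ • S).det := by
      show ((t₀⁻¹ : ℝ) • (1 : Matrix (Fin n) (Fin n) ℝ) + S).det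
        = t₀⁻¹ ^ n * ((1 : Matrix (Fin n) (Fin n) ℝ) + t₀ • S).det
      rw [← key, Matrix.det_smul, Fintype.card_fin]
    rw [hval]
    positivity
  by_contra hneg
  push_neg at hneg
  have hf0 : f 0 < 0 := by
    have : f 0 = S.det := by show ((0:ℝ) • _ + S).det = S.det; simp
    rw [this]; exact hneg
  have hcont : ContinuousOn f (Set.Icc 0 t₀⁻¹) := hfcont.continuousOn
  have hmem : (0:ℝ) ∈ Set.Ioo (f 0) (f t₀⁻¹) := ⟨hf0, hfx₀⟩
  obtain ⟨c, hc, hfc⟩ := intermediate_value_Ioo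
    (le_of_lt (inv_pos.mpr ht₀pos)) hcont hmem
  exact hfne c (ne_of_gt hc.1) hfc

theorem stmt_3 (n : ℕ) (K1 K2 : Matrix (Fin n) (Fin n) ℝ)
    (h1 : IsSkewType K1) (h2 : IsSkewType K2)
    (hequiv : ∃ P Q : Matrix (Fin n) (Fin n) ℝ,
      IsMonomial P ∧ IsMonomial Q ∧ P * K1 * Qᵀ = K2) :
    (K1 - 1).det = (K2 - 1).det := by
  obtain ⟨P, Q, hP, hQ, hPQ⟩ := hequiv
  -- skew-symmetry of K - 1
  have hskew : ∀ K : Matrix (Fin n) (Fin n) ℝ, K + Kᵀ = (2:ℝ) • 1 → (K - 1)ᵀ = -(K - 1) := by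
    intro K hK
    have hKT : Kᵀ = (2:ℝ) • 1 - K := by rw [← hK]; abel
    rw [Matrix.transpose_sub, hKT, Matrix.transpose_one]
    ext i j
    simp only [Matrix.sub_apply, Matrix.smul_apply, Matrix.one_apply, Matrix.neg_apply,
      smul_eq_mul]
    split_ifs <;> ring
  have hs1 := hskew K1 h1.2
  have hs2 := hskew K2 h2.2
  have hnn1 : 0 ≤ (K1 - 1).det := det_nonneg_of_skew _ hs1
  have hnn2 : 0 ≤ (K2 - 1).det := det_nonneg_of_skew _ hs2
  -- det(K-1)^2 = det(K*Kᵀ - 1)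
  have hsq : ∀ K : Matrix (Fin n) (Fin n) ℝ, K + Kᵀ = (2:ℝ) • 1 →
      (K - 1).det ^ 2 = (K * Kᵀ - 1).det := by
    intro K hK
    have hprod : (K - 1) * (K - 1)ᵀ = K * Kᵀ - 1 := by
      rw [Matrix.transpose_sub, Matrix.transpose_one]
      have expand : (K - 1) * (Kᵀ - 1) = K * Kᵀ - (K + Kᵀ) + 1 := by
        rw [Matrix.sub_mul, Matrix.mul_sub, Matrix.mul_sub, Matrix.mul_one,
          Matrix.one_mul, Matrix.one_mul]
        abel
      rw [expand, hK]
      ext i j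
      simp only [Matrix.sub_apply, Matrix.add_apply, Matrix.smul_apply, Matrix.one_apply,
        smul_eq_mul]
      split_ifs <;> ring
    calc (K - 1).det ^ 2 = (K - 1).det * (K - 1)ᵀ.det := by rw [Matrix.det_transpose]; ring
      _ = ((K - 1) * (K - 1)ᵀ).det := (Matrix.det_mul _ _).symm
      _ = (K * Kᵀ - 1).det := by rw [hprod]
  have e1 := hsq K1 h1.2
  have e2 := hsq K2 h2.2
  -- K2 * K2ᵀ - 1 = P * (K1 * K1ᵀ - 1) * Pᵀ
  have hK2 : K2 * K2ᵀ - 1 = P * (K1 * K1ᵀ - 1) * Pᵀ := by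
    have hmain : K2 * K2ᵀ = P * (K1 * K1ᵀ) * Pᵀ := by
      rw [← hPQ, Matrix.transpose_mul, Matrix.transpose_mul, Matrix.transpose_transpose]
      calc P * K1 * Qᵀ * (Q * (K1ᵀ * Pᵀ))
          = P * K1 * ((Qᵀ * Q) * (K1ᵀ * Pᵀ)) := by simp only [Matrix.mul_assoc]
        _ = P * (K1 * K1ᵀ) * Pᵀ := by
            rw [hQ.transpose_mul, Matrix.one_mul]; simp only [Matrix.mul_assoc]
    rw [hmain, Matrix.mul_sub, Matrix.sub_mul, Matrix.mul_one, hP.mul_transpose]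
  have edet : (K2 * K2ᵀ - 1).det = (K1 * K1ᵀ - 1).det := by
    rw [hK2, Matrix.det_mul, Matrix.det_mul, Matrix.det_transpose]
    have hPdet : P.det * P.det = 1 := by
      have := congrArg Matrix.det hP.mul_transpose
      rwa [Matrix.det_mul, Matrix.det_transpose, Matrix.det_one] at this
    nlinarith [hPdet]
  have hsqeq : (K1 - 1).det ^ 2 = (K2 - 1).det ^ 2 := by rw [e1, e2, edet]
  nlinarith [hsqeq, hnn1, hnn2]
end

section
/- Let M be an n×n (-1,1)-matrix and K an n×n (-1,1)-matrix of skew type. If M and K are Hadamard equivalent (P·M·Q^T = K for some {-1,0,1}-monomial matrices P, Q), then there exists a {-1,0,1}-monomial matrix Q such that Q^T·K·Q = R·M for some {-1,0,1}-monomial matrix R; in particular Q^T·K·Q, which is again of skew type, is obtained from M by row interchanges and row negations. -/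
open Matrix

lemma perm_mul_diag {n : ℕ} (σ : Equiv.Perm (Fin n)) (e : Fin n → ℝ) :
    σ.permMatrix ℝ * Matrix.diagonal e = Matrix.diagonal (e ∘ σ) * σ.permMatrix ℝ := by
  rw [Equiv.Perm.permMatrix, PEquiv.toMatrix_toPEquiv_mul,
    PEquiv.mul_toMatrix_toPEquiv]
  ext i j
  by_cases h : σ i = j
  · subst h; simp [Matrix.submatrix_apply, Matrix.diagonal_apply]
  · have h' : i ≠ σ.symm j := fun hc => h (by rw [hc]; simp)
    simp [Matrix.submatrix_apply, Matrix.diagonal_apply, h, h']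

lemma monomial_mul {n : ℕ} {A B : Matrix (Fin n) (Fin n) ℝ}
    (hA : IsMonomial A) (hB : IsMonomial B) : IsMonomial (A * B) := by
  obtain ⟨d, σ, hd, rfl⟩ := hA
  obtain ⟨e, τ, he, rfl⟩ := hB
  refine ⟨fun i => d i * e (σ i), σ.trans τ, ?_, ?_⟩
  · intro i
    rcases hd i with h1 | h1 <;> rcases he (σ i) with h2 | h2 <;>
      simp [h1, h2]
  · have : Equiv.Perm.permMatrix ℝ (σ.trans τ) = σ.permMatrix ℝ * τ.permMatrix ℝ := by
      simp [Equiv.Perm.permMatrix, ← PEquiv.toMatrix_trans, Equiv.toPEquiv_trans]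
    rw [this, ← Matrix.diagonal_mul_diagonal d (fun i => e (σ i))]
    calc Matrix.diagonal d * σ.permMatrix ℝ * (Matrix.diagonal e * τ.permMatrix ℝ)
        = Matrix.diagonal d * (σ.permMatrix ℝ * Matrix.diagonal e) * τ.permMatrix ℝ := by
          simp only [Matrix.mul_assoc]
      _ = Matrix.diagonal d * (Matrix.diagonal (e ∘ σ) * σ.permMatrix ℝ) * τ.permMatrix ℝ := by
          rw [perm_mul_diag]
      _ = Matrix.diagonal d * Matrix.diagonal (e ∘ σ) * (σ.permMatrix ℝ * τ.permMatrix ℝ) := by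
          simp only [Matrix.mul_assoc]

lemma perm_transpose {n : ℕ} (σ : Equiv.Perm (Fin n)) :
    (σ.permMatrix ℝ)ᵀ = Equiv.Perm.permMatrix ℝ σ.symm := by
  simp [Equiv.Perm.permMatrix, Equiv.toPEquiv_symm, PEquiv.toMatrix_symm]

lemma monomial_transpose {n : ℕ} {A : Matrix (Fin n) (Fin n) ℝ}
    (hA : IsMonomial A) : IsMonomial Aᵀ := by
  obtain ⟨d, σ, hd, rfl⟩ := hA
  refine ⟨d ∘ σ.symm, σ.symm, fun i => hd _, ?_⟩
  rw [Matrix.transpose_mul, Matrix.diagonal_transpose, perm_transpose, perm_mul_diag]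

lemma monomial_orthogonal {n : ℕ} {A : Matrix (Fin n) (Fin n) ℝ}
    (hA : IsMonomial A) : Aᵀ * A = 1 := by
  obtain ⟨d, σ, hd, rfl⟩ := hA
  rw [Matrix.transpose_mul, Matrix.diagonal_transpose, perm_transpose]
  have hdd : (fun i => d i * d i) = fun _ => (1:ℝ) :=
    funext fun i => by rcases hd i with h | h <;> simp [h]
  have h1 : Matrix.diagonal d * Matrix.diagonal d = (1 : Matrix (Fin n) (Fin n) ℝ) := by
    rw [Matrix.diagonal_mul_diagonal, hdd, Matrix.diagonal_one]
  calc Equiv.Perm.permMatrix ℝ σ.symm * Matrix.diagonal d * (Matrix.diagonal d * σ.permMatrix ℝ)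
      = Equiv.Perm.permMatrix ℝ σ.symm * (Matrix.diagonal d * Matrix.diagonal d) * σ.permMatrix ℝ := by
        simp only [Matrix.mul_assoc]
    _ = Equiv.Perm.permMatrix ℝ σ.symm * σ.permMatrix ℝ := by rw [h1]; simp only [Matrix.mul_assoc, Matrix.one_mul]
    _ = 1 := by
        rw [Equiv.Perm.permMatrix, Equiv.Perm.permMatrix, ← PEquiv.toMatrix_trans,
          ← Equiv.toPEquiv_trans, Equiv.symm_trans_self, Equiv.toPEquiv_refl,
          PEquiv.toMatrix_refl]

lemma monomial_mul_entries {n : ℕ} {R M : Matrix (Fin n) (Fin n) ℝ}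
    (hR : IsMonomial R) (hM : ∀ i j, M i j = 1 ∨ M i j = -1) :
    ∀ i j, (R * M) i j = 1 ∨ (R * M) i j = -1 := by
  obtain ⟨d, σ, hd, rfl⟩ := hR
  intro i j
  rw [Matrix.mul_assoc, PEquiv.toMatrix_toPEquiv_mul, Matrix.diagonal_mul]
  rcases hd i with h | h <;> rcases hM (σ i) j with h' | h' <;>
    simp [Matrix.submatrix_apply, h, h']

theorem stmt_4 (n : ℕ) (M K : Matrix (Fin n) (Fin n) ℝ)
    (hM : ∀ i j, M i j = 1 ∨ M i j = -1)
    (hK : IsSkewType K)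
    (hequiv : ∃ P Q : Matrix (Fin n) (Fin n) ℝ,
      IsMonomial P ∧ IsMonomial Q ∧ P * M * Qᵀ = K) :
    ∃ Q R : Matrix (Fin n) (Fin n) ℝ, IsMonomial Q ∧ IsMonomial R ∧
      Qᵀ * K * Q = R * M ∧ IsSkewType (Qᵀ * K * Q) := by
  obtain ⟨P, Q, hP, hQ, hPQ⟩ := hequiv
  have hQT := monomial_transpose hQ
  have hR : IsMonomial (Qᵀ * P) := monomial_mul hQT hP
  have hQQ : Qᵀ * Q = 1 := monomial_orthogonal hQ
  have hQQT : Q * Qᵀ = 1 := by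
    have := monomial_orthogonal hQT
    rwa [Matrix.transpose_transpose] at this
  have key : Qᵀ * K * Q = (Qᵀ * P) * M := by
    rw [← hPQ]
    calc Qᵀ * (P * M * Qᵀ) * Q = Qᵀ * P * M * (Qᵀ * Q) := by
          simp only [Matrix.mul_assoc]
      _ = Qᵀ * P * M := by rw [hQQ, Matrix.mul_one]
  refine ⟨Q, Qᵀ * P, hQ, hR, key, ?_, ?_⟩
  · rw [key]; exact monomial_mul_entries hR hM
  · have h1 : (Qᵀ * K * Q) + (Qᵀ * K * Q)ᵀ = Qᵀ * (K + Kᵀ) * Q := by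
      simp [Matrix.transpose_mul, Matrix.mul_add, Matrix.add_mul, Matrix.mul_assoc]
    rw [h1, hK.2]
    simp [Matrix.mul_smul, Matrix.smul_mul, hQQ]
end

section
/- Let G = {g_1 = 1, g_2, ..., g_n} be a finite group and ψ a binary cocycle on G with cocyclic matrix M_ψ = [ψ(g_i, g_j)]. Then the Gram matrix of rows satisfies [M_ψ·M_ψ^T]_{ij} = ψ(g_i·g_j⁻¹, g_j) · Σ_{g ∈ G} ψ(g_i·g_j⁻¹, g). -/
open Matrix Finset

theorem stmt_9 (G : Type*) [Group G] [Fintype G]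
    (ψ : G → G → ℝ)
    (hpm : ∀ g h, ψ g h = 1 ∨ ψ g h = -1)
    (hcoc : ∀ g h k : G, ψ g h * ψ (g * h) k = ψ h k * ψ g (h * k)) :
    ∀ i j : G,
      ((Matrix.of ψ) * (Matrix.of ψ)ᵀ) i j
        = ψ (i * j⁻¹) j * ∑ g : G, ψ (i * j⁻¹) g := by
  intro i j
  have hsq : ∀ g h, ψ g h * ψ g h = 1 := by
    intro g h; rcases hpm g h with h1 | h1 <;> rw [h1] <;> ring
  rw [Matrix.mul_apply]
  rw [← Equiv.sum_comp (Equiv.mulLeft j) (fun g => ψ (i * j⁻¹) g)]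
  rw [Finset.mul_sum]
  apply Finset.sum_congr rfl
  intro k _
  have h := hcoc (i * j⁻¹) j k
  simp only [inv_mul_cancel_right] at h
  simp only [Matrix.of_apply, Matrix.transpose_apply, Equiv.coe_mulLeft]
  linear_combination (ψ (i * j⁻¹) j * ψ j k) * h - (ψ i k * ψ j k) * hsq (i * j⁻¹) j
    + (ψ (i * j⁻¹) j * ψ (i * j⁻¹) (j * k)) * hsq j k
end

section
/- Let G be a finite group of order n and ψ a binary cocycle on G with cocyclic matrix M_ψ. Then the Gram matrix of columns satisfies [M_ψ^T·M_ψ]_{ij} = ψ(g_i, g_i⁻¹·g_j) · Σ_{g ∈ G} ψ(g, g_i⁻¹·g_j). -/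
open Matrix Finset

theorem stmt_10 (G : Type*) [Group G] [Fintype G]
    (ψ : G → G → ℝ)
    (hpm : ∀ g h, ψ g h = 1 ∨ ψ g h = -1)
    (hcoc : ∀ g h k : G, ψ g h * ψ (g * h) k = ψ h k * ψ g (h * k)) :
    ∀ i j : G,
      ((Matrix.of ψ)ᵀ * (Matrix.of ψ)) i j
        = ψ i (i⁻¹ * j) * ∑ g : G, ψ g (i⁻¹ * j) := by
  have hsq : ∀ g h : G, ψ g h * ψ g h = 1 := by
    intro g h; rcases hpm g h with h1 | h1 <;> rw [h1] <;> ring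
  intro i j
  have key : ∀ g : G, ψ g i * ψ g j = ψ i (i⁻¹ * j) * ψ (g * i) (i⁻¹ * j) := by
    intro g
    have h := hcoc g i (i⁻¹ * j)
    rw [mul_inv_cancel_left] at h
    have s1 := hsq g i
    have s2 := hsq i (i⁻¹ * j)
    linear_combination (-(ψ g i * ψ i (i⁻¹ * j))) * h + (ψ i (i⁻¹ * j) * ψ (g * i) (i⁻¹ * j)) * s1 + (-(ψ g i * ψ g j)) * s2
  rw [Matrix.mul_apply]
  simp only [Matrix.transpose_apply, Matrix.of_apply]
  calc ∑ g : G, ψ g i * ψ g j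
      = ∑ g : G, ψ i (i⁻¹ * j) * ψ (g * i) (i⁻¹ * j) := by
        exact Finset.sum_congr rfl fun g _ => key g
    _ = ψ i (i⁻¹ * j) * ∑ g : G, ψ (g * i) (i⁻¹ * j) := by rw [Finset.mul_sum]
    _ = ψ i (i⁻¹ * j) * ∑ g : G, ψ g (i⁻¹ * j) := by
        congr 1
        exact Fintype.sum_equiv (Equiv.mulRight i) _ _ (fun g => rfl)
end

section
/- Let G be a finite group of order n and ψ a normalized binary cocycle on G (ψ(1,g) = ψ(g,1) = 1 for all g). The cocyclic matrix M_ψ satisfies M_ψ·M_ψ^T = n·I (i.e., M_ψ is Hadamard) if and only if for every g ≠ 1 in G, the row sum Σ_{h ∈ G} ψ(g, h) equals 0. -/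
/-!
For a `±1`-valued cocycle, multiplying the cocycle identity at `(g, b, h)` by `ψ(g,b) ψ(b,h)` gives
`ψ(gb,h) ψ(b,h) = ψ(g,b) ψ(g,bh)`. Summing over `h` and reindexing `h ↦ bh`, the inner product of
rows `a` and `b` of `M_ψ` is `±1` times the row sum of row `ab⁻¹`. Hence distinct rows are
orthogonal exactly when all row sums off the identity vanish, while the diagonal entries equal `n`
because row `1` is constant `1`.
-/

open Matrix Finset

section SignCocycle

variable {G : Type*} [Group G] {ψ : G → G → ℝ}

theorem sign_cocycle_mul_left_mul (hpm : ∀ g h, ψ g h = 1 ∨ ψ g h = -1)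
    (hcoc : ∀ g h k : G, ψ g h * ψ (g * h) k = ψ h k * ψ g (h * k)) (g b h : G) :
    ψ (g * b) h * ψ b h = ψ g b * ψ g (b * h) := by
  have hsq : ∀ x y, ψ x y * ψ x y = 1 := fun x y => by
    rcases hpm x y with hxy | hxy <;> rw [hxy] <;> norm_num
  linear_combination (ψ g b * ψ b h) * hcoc g b h - (ψ (g * b) h * ψ b h) * hsq g b
    + (ψ g b * ψ g (b * h)) * hsq b h

variable [Fintype G]

theorem sum_sign_cocycle_mul_left_mul (hpm : ∀ g h, ψ g h = 1 ∨ ψ g h = -1)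
    (hcoc : ∀ g h k : G, ψ g h * ψ (g * h) k = ψ h k * ψ g (h * k)) (g b : G) :
    ∑ h, ψ (g * b) h * ψ b h = ψ g b * ∑ h, ψ g h := by
  rw [← Equiv.sum_comp (Equiv.mulLeft b) (ψ g), mul_sum]
  exact sum_congr rfl fun h _ => sign_cocycle_mul_left_mul hpm hcoc g b h

theorem of_mul_transpose_apply_of_sign_cocycle (hpm : ∀ g h, ψ g h = 1 ∨ ψ g h = -1)
    (hcoc : ∀ g h k : G, ψ g h * ψ (g * h) k = ψ h k * ψ g (h * k)) (a b : G) :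
    (of ψ * (of ψ)ᵀ) a b = ψ (a * b⁻¹) b * ∑ h, ψ (a * b⁻¹) h := by
  rw [← sum_sign_cocycle_mul_left_mul hpm hcoc, inv_mul_cancel_right]
  simp only [mul_apply, transpose_apply, of_apply]

end SignCocycle

theorem stmt_11 (G : Type*) [Group G] [Fintype G] [DecidableEq G]
    (ψ : G → G → ℝ)
    (hpm : ∀ g h, ψ g h = 1 ∨ ψ g h = -1)
    (hcoc : ∀ g h k : G, ψ g h * ψ (g * h) k = ψ h k * ψ g (h * k))
    (hnorm : ∀ g : G, ψ 1 g = 1 ∧ ψ g 1 = 1) :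
    (Matrix.of ψ) * (Matrix.of ψ)ᵀ
        = (Fintype.card G : ℝ) • (1 : Matrix G G ℝ)
      ↔ ∀ g : G, g ≠ 1 → ∑ h : G, ψ g h = 0 := by
  have hgram := of_mul_transpose_apply_of_sign_cocycle hpm hcoc
  constructor
  · intro hM g hg
    simpa [hgram, hnorm, hg] using congrFun (congrFun hM g) 1
  · intro hrow
    ext a b
    rw [hgram]
    by_cases hab : a = b
    · subst hab
      simp [hnorm]
    · have hne : a * b⁻¹ ≠ 1 := mt mul_inv_eq_one.mp hab
      simp [hrow _ hne, hab]
end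

section
/- Let n ≡ 2 (mod 4) with n > 2. If there exists an n×n ±1 matrix M with M·M^T = diag(L, L), L = (n-2)I_{n/2} + 2J_{n/2} (so that det M attains the Ehlich–Wojtas bound), then 2n - 2 is a sum of two integer squares. -/
/-
Write `n = 2m` and `G = M Mᵀ = (n - 2) I + 2 K`, where `K` has all-ones diagonal `m × m` blocks.
Since `K² = m K`, we get `(G - (n - 2)) (G - (2n - 2)) = 0`; in particular `G`, hence `M`, is
invertible, so `N = Mᵀ M` satisfies the same quadratic relation. Therefore
`2 Mᵀ K M = Mᵀ (G - (n - 2)) M = N² - (n - 2) N = (2n - 2) (N - (n - 2))`,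
and as `N` has diagonal entries `n`, every diagonal entry of `Mᵀ K M` equals `2n - 2`. But the
`j`-th diagonal entry of `Mᵀ K M` is `s₁² + s₂²`, where `s₁`, `s₂` are the (integer) sums of the
two halves of the `j`-th column of `M`.
-/

open Matrix

section QuadraticRelation

variable {K R : Type*} [CommRing K] [Ring R] [Algebra K R]

theorem sub_smul_one_mul_sub_smul_one (x : R) (a b : K) :
    (x - a • 1) * (x - b • 1) = x * x - (a + b) • x + (a * b) • 1 := by
  simp only [sub_mul, mul_sub, mul_smul_comm, smul_mul_assoc, mul_one, one_mul]
  module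

theorem sub_smul_one_mul_sub_smul_one_eq_zero_of_mul_swap {x y : R} (hx : IsLeftRegular x)
    {a b : K} (h : (x * y - a • 1) * (x * y - b • 1) = 0) :
    (y * x - a • 1) * (y * x - b • 1) = 0 := by
  have hcomm (c : K) : x * (y * x - c • 1) = (x * y - c • 1) * x := by
    simp only [mul_sub, sub_mul, mul_assoc, mul_smul_comm, smul_mul_assoc, mul_one, one_mul]
  apply hx
  change x * _ = x * 0
  rw [mul_zero, ← mul_assoc, hcomm, mul_assoc, hcomm, ← mul_assoc, h, zero_mul]

end QuadraticRelation

theorem isUnit_of_sub_smul_one_mul_sub_smul_one_eq_zero {K R : Type*} [Field K] [Ring R]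
    [Algebra K R] {x : R} {a b : K} (ha : a ≠ 0) (hb : b ≠ 0)
    (h : (x - a • 1) * (x - b • 1) = 0) : IsUnit x := by
  rw [sub_smul_one_mul_sub_smul_one] at h
  have hab : (a * b)⁻¹ • (a * b) • (1 : R) = 1 := inv_smul_smul₀ (mul_ne_zero ha hb) 1
  have hx : (a + b) • x - x * x = (a * b) • 1 := by
    rw [← sub_eq_zero, ← neg_eq_zero, ← h]
    module
  refine ⟨⟨x, (a * b)⁻¹ • ((a + b) • 1 - x), ?_, ?_⟩, rfl⟩
  · rw [mul_smul_comm, mul_sub, mul_smul_comm, mul_one, hx, hab]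
  · rw [smul_mul_assoc, sub_mul, smul_mul_assoc, one_mul, hx, hab]

namespace Matrix

variable {ι κ α : Type*} [Fintype ι]

theorem transpose_mul_vecMulVec_mul_apply_self [CommSemiring α] (M : Matrix ι κ α) (v : ι → α)
    (j : κ) : (Mᵀ * vecMulVec v v * M) j j = (v ᵥ* M) j ^ 2 := by
  rw [mul_vecMulVec, vecMulVec_mul, vecMulVec_apply, mulVec_transpose, sq]

theorem transpose_mul_self_apply_self_of_forall_eq_one_or_eq_neg_one [Ring α] {M : Matrix ι κ α}
    (hM : ∀ i j, M i j = 1 ∨ M i j = -1) (j : κ) : (Mᵀ * M) j j = Fintype.card ι := by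
  have hsq (i : ι) : M i j * M i j = 1 := by rcases hM i j with h | h <;> simp [h]
  simp [mul_apply, hsq]

variable (α) in
def blockOnes [Semiring α] (m : ℕ) : Matrix (Fin m ⊕ Fin m) (Fin m ⊕ Fin m) α :=
  fromBlocks (of fun _ _ => 1) 0 0 (of fun _ _ => 1)

theorem blockOnes_mul_self [Semiring α] (m : ℕ) :
    blockOnes α m * blockOnes α m = (m : α) • blockOnes α m := by
  have hJ : (of fun _ _ => 1 : Matrix (Fin m) (Fin m) α) * of (fun _ _ => 1) =
      (m : α) • of fun _ _ => 1 := by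
    ext; simp [mul_apply]
  simp [blockOnes, fromBlocks_multiply, hJ, fromBlocks_smul]

theorem blockOnes_eq_add_vecMulVec [Semiring α] (m : ℕ) :
    blockOnes α m =
      vecMulVec (Sum.elim 1 0) (Sum.elim 1 0) + vecMulVec (Sum.elim 0 1) (Sum.elim 0 1) := by
  ext (i | i) (j | j) <;> simp [blockOnes, vecMulVec_apply]

theorem transpose_mul_blockOnes_mul_apply_self [CommSemiring α] {m : ℕ}
    (M : Matrix (Fin m ⊕ Fin m) κ α) (j : κ) :
    (Mᵀ * blockOnes α m * M) j j = (∑ i, M (.inl i) j) ^ 2 + (∑ i, M (.inr i) j) ^ 2 := by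
  rw [blockOnes_eq_add_vecMulVec, Matrix.mul_add, Matrix.add_mul, add_apply,
    transpose_mul_vecMulVec_mul_apply_self, transpose_mul_vecMulVec_mul_apply_self]
  simp [vecMul, dotProduct]

theorem fromBlocks_smul_one_add_smul_of_one [Semiring α] {m : ℕ} (c d : α) :
    fromBlocks (c • 1 + d • of fun _ _ => 1) 0 0 (c • 1 + d • of fun _ _ => 1) =
      c • (1 : Matrix (Fin m ⊕ Fin m) (Fin m ⊕ Fin m) α) + d • blockOnes α m := by
  rw [blockOnes, fromBlocks_smul, ← fromBlocks_one, fromBlocks_smul, fromBlocks_add]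
  simp

end Matrix

theorem sq_sum_inl_add_sq_sum_inr_eq_of_mul_transpose_eq {m : ℕ} (hm : 2 ≤ m)
    {M : Matrix (Fin m ⊕ Fin m) (Fin m ⊕ Fin m) ℝ} (hpm : ∀ i j, M i j = 1 ∨ M i j = -1)
    (hgram : M * Mᵀ = (2 * m - 2 : ℝ) • 1 + (2 : ℝ) • blockOnes ℝ m) (j : Fin m ⊕ Fin m) :
    (∑ i, M (.inl i) j) ^ 2 + (∑ i, M (.inr i) j) ^ 2 = 4 * m - 2 := by
  set a : ℝ := 2 * m - 2
  set b : ℝ := 4 * m - 2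
  have hmR : (2 : ℝ) ≤ m := by exact_mod_cast hm
  have hG : (M * Mᵀ - a • 1) * (M * Mᵀ - b • 1) = 0 := by
    rw [hgram, add_sub_cancel_left]
    simp only [Matrix.mul_sub, Matrix.mul_add, Matrix.smul_mul, Matrix.mul_smul, Matrix.mul_one,
      blockOnes_mul_self]
    module
  have hM : IsLeftRegular M :=
    (isUnit_of_mul_isUnit_left (isUnit_of_sub_smul_one_mul_sub_smul_one_eq_zero
      (by linarith) (by linarith) hG)).isRegular.left
  have hN := sub_smul_one_mul_sub_smul_one_eq_zero_of_mul_swap hM hG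
  have key : (2 : ℝ) • (Mᵀ * blockOnes ℝ m * M) = b • (Mᵀ * M - a • 1) :=
    calc (2 : ℝ) • (Mᵀ * blockOnes ℝ m * M) = Mᵀ * (M * Mᵀ - a • 1) * M := by
          rw [hgram, add_sub_cancel_left, Matrix.mul_smul, Matrix.smul_mul]
      _ = (Mᵀ * M - a • 1) * (Mᵀ * M - b • 1) + b • (Mᵀ * M - a • 1) := by
          rw [sub_smul_one_mul_sub_smul_one, Matrix.mul_sub, Matrix.sub_mul, Matrix.mul_smul,
            Matrix.smul_mul, Matrix.mul_one]
          simp only [Matrix.mul_assoc]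
          module
      _ = b • (Mᵀ * M - a • 1) := by rw [hN, zero_add]
  have hj := congrFun (congrFun key j) j
  rw [Matrix.smul_apply, transpose_mul_blockOnes_mul_apply_self, Matrix.smul_apply,
    Matrix.sub_apply, transpose_mul_self_apply_self_of_forall_eq_one_or_eq_neg_one hpm,
    Matrix.smul_apply, one_apply_eq] at hj
  simp only [smul_eq_mul, Fintype.card_sum, Fintype.card_fin, Nat.cast_add, mul_one] at hj
  linarith

theorem stmt_17_general (m : ℕ) (hn2 : 2 * m > 2)
    (M : Matrix (Fin m ⊕ Fin m) (Fin m ⊕ Fin m) ℝ)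
    (hpm : ∀ i j, M i j = 1 ∨ M i j = -1)
    (L : Matrix (Fin m) (Fin m) ℝ)
    (hL : L = ((2 * m : ℝ) - 2) • (1 : Matrix (Fin m) (Fin m) ℝ)
            + (2 : ℝ) • Matrix.of (fun _ _ => (1 : ℝ)))
    (hgram : M * Mᵀ = Matrix.fromBlocks L 0 0 L) :
    ∃ x y : ℤ, 2 * (2 * (m : ℤ)) - 2 = x ^ 2 + y ^ 2 := by
  have hm : 2 ≤ m := by omega
  rw [hL, fromBlocks_smul_one_add_smul_of_one] at hgram
  have hint (i j) : ∃ z : ℤ, M i j = z := by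
    rcases hpm i j with h | h
    · exact ⟨1, by simp [h]⟩
    · exact ⟨-1, by simp [h]⟩
  choose Z hZ using hint
  let j₀ : Fin m ⊕ Fin m := .inl ⟨0, by omega⟩
  refine ⟨∑ i, Z (.inl i) j₀, ∑ i, Z (.inr i) j₀, ?_⟩
  have hsum := sq_sum_inl_add_sq_sum_inr_eq_of_mul_transpose_eq hm hpm hgram j₀
  simp only [hZ] at hsum
  rw [← Int.cast_inj (α := ℝ)]
  push_cast
  linarith

theorem stmt_17 (m : ℕ) (hn : (2 * m) % 4 = 2) (hn2 : 2 * m > 2)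
    (M : Matrix (Fin m ⊕ Fin m) (Fin m ⊕ Fin m) ℝ)
    (hpm : ∀ i j, M i j = 1 ∨ M i j = -1)
    (L : Matrix (Fin m) (Fin m) ℝ)
    (hL : L = ((2 * m : ℝ) - 2) • (1 : Matrix (Fin m) (Fin m) ℝ)
            + (2 : ℝ) • Matrix.of (fun _ _ => (1 : ℝ)))
    (hgram : M * Mᵀ = Matrix.fromBlocks L 0 0 L) :
    ∃ x y : ℤ, 2 * (2 * (m : ℤ)) - 2 = x ^ 2 + y ^ 2 :=
  stmt_17_general m hn2 M hpm L hL hgram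
end

section
/- Let M = [[X, Y],[Z, W]] be an n×n real orthogonal matrix partitioned so that X is l×l and W is (n-l)×(n-l). Then det(X) = det(W) · det(M). -/
open Matrix

theorem stmt_18 (l k : ℕ)
    (M : Matrix (Fin l ⊕ Fin k) (Fin l ⊕ Fin k) ℝ)
    (horth : M * Mᵀ = 1) :
    (M.toBlocks₁₁).det = (M.toBlocks₂₂).det * M.det := by
  set A := M.toBlocks₁₁ with hA
  set B := M.toBlocks₁₂ with hB
  set C := M.toBlocks₂₁ with hC
  set D := M.toBlocks₂₂ with hD
  have hM : M = fromBlocks A B C D := (fromBlocks_toBlocks M).symm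
  have horth' : fromBlocks (A * Aᵀ + B * Bᵀ) (A * Cᵀ + B * Dᵀ)
      (C * Aᵀ + D * Bᵀ) (C * Cᵀ + D * Dᵀ)
      = fromBlocks 1 0 0 (1 : Matrix (Fin k) (Fin k) ℝ) := by
    rw [← fromBlocks_multiply, ← fromBlocks_transpose, ← hM, horth, fromBlocks_one]
  have h11 : A * Aᵀ + B * Bᵀ = 1 := by
    have := congrArg Matrix.toBlocks₁₁ horth'
    rwa [toBlocks_fromBlocks₁₁, toBlocks_fromBlocks₁₁] at this
  have h21 : C * Aᵀ + D * Bᵀ = 0 := by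
    have := congrArg Matrix.toBlocks₂₁ horth'
    rwa [toBlocks_fromBlocks₂₁, toBlocks_fromBlocks₂₁] at this
  have hprod : M * fromBlocks Aᵀ 0 Bᵀ 1 = fromBlocks 1 B 0 D := by
    rw [hM, fromBlocks_multiply]
    simp [h11, h21]
  have hdet : M.det * A.det = D.det := by
    have := congrArg Matrix.det hprod
    rwa [det_mul, det_fromBlocks_zero₁₂, det_fromBlocks_zero₂₁, det_transpose,
      det_one, det_one, mul_one, one_mul] at this
  have hsq : M.det * M.det = 1 := by
    have := congrArg Matrix.det horth
    rwa [det_mul, det_transpose, det_one] at this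
  calc A.det = M.det * M.det * A.det := by rw [hsq, one_mul]
    _ = M.det * D.det := by rw [mul_assoc, hdet]
    _ = D.det * M.det := mul_comm _ _
end
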